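/- Let X_1,…,X_n, Y_1,…,Y_m, Z be short spaces over K with seminorms indexed by a partially ordered commutative monoid 𝕃. Let ξ : X_1 × ⋯ × X_n × Y_1 × ⋯ × Y_m → Z be a K-multilinear map, and let ψ be the corresponding multilinear map sending (y_1,…,y_m) to the multilinear map (x_1,…,x_n) ↦ ξ(x_1,…,x_n,y_1,…,y_m). Then ξ is short (i.e. ‖ξ(x,y)‖_{Σλ_i+Σμ_j} ≤ ∏‖x_i‖_{λ_i}·∏‖y_j‖_{μ_j} for all arguments and all indices) if and only if for all y_1,…,y_m and μ_1,…,μ_m one has ‖ψ(y_1,…,y_m)‖_{μ_1+⋯+μ_m} ≤ ‖y_1‖_{μ_1}⋯‖y_m‖_{μ_m}, where ‖g‖_l = inf{ c > 0 | ‖g(x_1,…,x_n)‖_{λ_1+⋯+λ_n+l} ≤ c·∏_k ‖x_k‖_{λ_k} for all x_k and λ_k } is the operator seminorm on multilinear maps X_1 × ⋯ × X_n → Z. -/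

import Mathlib

/-!
The operator seminorm `‖g‖_l` is the infimum of the admissible constants `c > 0`, so
`‖g‖_l ≤ B` holds exactly when `B` itself bounds `‖g x‖_{Σλ + l}` by `B · ∏ ‖x_k‖_{λ_k}`: for finite
`B` every `B + ε` is admissible, and conversely the bound passes to the infimum. With the convention
`0 · ∞ = ∞` this also covers `B = ∞` and factors `∏ ‖x_k‖ ∈ {0, ∞}`, and then both sides of the
theorem are the same family of inequalities, quantified in a different order.
-/

open scoped ENNReal

/-- Product of two extended nonnegative reals with the convention `0 ⬝ ∞ = ∞ ⬝ 0 = ∞`. -/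
noncomputable def emul (a b : ℝ≥0∞) : ℝ≥0∞ := by
  classical exact if (a = 0 ∧ b = ⊤) ∨ (a = ⊤ ∧ b = 0) then ⊤ else a * b

/-- Product of a finite family of extended nonnegative reals with the convention `0 ⬝ ∞ = ∞`. -/
noncomputable def eprod {n : ℕ} (v : Fin n → ℝ≥0∞) : ℝ≥0∞ :=
  (List.ofFn v).foldr emul 1

/-- The operator seminorm with index `l ∈ 𝕃` on multilinear maps between short spaces. -/
noncomputable def opSeminorm {𝕜 : Type*} [RCLike 𝕜] {𝕃 : Type*} [AddCommMonoid 𝕃]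
    [PartialOrder 𝕃] {n : ℕ} {X : Fin n → Type*} [∀ k, AddCommGroup (X k)]
    [∀ k, Module 𝕜 (X k)] {Z : Type*} [AddCommGroup Z] [Module 𝕜 Z]
    (pX : ∀ k, 𝕃 → X k → ℝ≥0∞) (pZ : 𝕃 → Z → ℝ≥0∞)
    (f : MultilinearMap 𝕜 X Z) (l : 𝕃) : ℝ≥0∞ :=
  sInf {e : ℝ≥0∞ | ∃ c : ℝ, 0 < c ∧ e = ENNReal.ofReal c ∧
    ∀ (x : ∀ k, X k) (lam : Fin n → 𝕃),
      pZ ((∑ k, lam k) + l) (f x) ≤ ENNReal.ofReal c * eprod (fun k => pX k (lam k) (x k))}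

namespace ENNReal

theorem le_sInf_mul {S : Set ℝ≥0∞} {a b : ℝ≥0∞} (hS : S.Nonempty) (ha : a ≠ ⊤)
    (h : ∀ e ∈ S, b ≤ e * a) : b ≤ sInf S * a := by
  have : Nonempty S := hS.to_subtype
  rw [sInf_eq_iInf', ENNReal.iInf_mul (by simp [ha])]
  exact le_iInf fun e => h e e.2

end ENNReal

lemma emul_top_right (a : ℝ≥0∞) : emul a ⊤ = ⊤ := by
  unfold emul
  split_ifs with h
  · rfl
  · exact ENNReal.mul_top fun h0 => h (Or.inl ⟨h0, rfl⟩)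

lemma emul_top_left (b : ℝ≥0∞) : emul ⊤ b = ⊤ := by
  unfold emul
  split_ifs with h
  · rfl
  · exact ENNReal.top_mul fun h0 => h (Or.inr ⟨rfl, h0⟩)

lemma emul_of_ne_top {a b : ℝ≥0∞} (ha : a ≠ ⊤) (hb : b ≠ ⊤) : emul a b = a * b := by
  unfold emul
  rw [if_neg]
  rintro (⟨_, h⟩ | ⟨h, _⟩)
  · exact hb h
  · exact ha h

theorem sInf_admissible_le_iff {ι : Type*} (F G : ι → ℝ≥0∞) (B : ℝ≥0∞) :
    sInf {e : ℝ≥0∞ | ∃ c : ℝ, 0 < c ∧ e = ENNReal.ofReal c ∧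
        ∀ i, F i ≤ ENNReal.ofReal c * G i} ≤ B ↔ ∀ i, F i ≤ emul (G i) B := by
  set S := {e : ℝ≥0∞ | ∃ c : ℝ, 0 < c ∧ e = ENNReal.ofReal c ∧
        ∀ i, F i ≤ ENNReal.ofReal c * G i}
  rcases eq_or_ne B ⊤ with rfl | hB
  · simp [emul_top_right]
  constructor
  · intro h i
    rcases eq_or_ne (G i) ⊤ with hG | hG
    · simp [hG, emul_top_left]
    have hS : S.Nonempty := 
      (sInf_lt_iff.1 (h.trans_lt hB.lt_top)).imp fun _ he => he.1
    calc F i ≤ sInf S * G i := ENNReal.le_sInf_mul hS hG fun e ⟨c, _, he, hc⟩ => he ▸ hc i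
      _ ≤ B * G i := by gcongr
      _ = emul (G i) B := by rw [emul_of_ne_top hG hB, mul_comm]
  · intro h
    refine ENNReal.le_of_forall_pos_le_add fun ε hε _ => ?_
    have hc : ENNReal.ofReal (B.toReal + ε) = B + ε := by
      rw [ENNReal.ofReal_add ENNReal.toReal_nonneg ε.coe_nonneg, ENNReal.ofReal_toReal hB,
        ENNReal.ofReal_coe_nnreal]
    refine hc ▸ sInf_le ⟨B.toReal + ε, by positivity, rfl, fun i => hc ▸ ?_⟩
    rcases eq_or_ne (G i) ⊤ with hG | hG
    · simp [hG, hε.ne']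
    calc F i ≤ emul (G i) B := h i
      _ = B * G i := by rw [emul_of_ne_top hG hB, mul_comm]
      _ ≤ (B + ε) * G i := by gcongr; exact le_self_add

theorem opSeminorm_le_iff {𝕜 : Type*} [RCLike 𝕜] {𝕃 : Type*} [AddCommMonoid 𝕃]
    [PartialOrder 𝕃] {n : ℕ} {X : Fin n → Type*} [∀ k, AddCommGroup (X k)]
    [∀ k, Module 𝕜 (X k)] {Z : Type*} [AddCommGroup Z] [Module 𝕜 Z]
    (pX : ∀ k, 𝕃 → X k → ℝ≥0∞) (pZ : 𝕃 → Z → ℝ≥0∞)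
    (f : MultilinearMap 𝕜 X Z) (l : 𝕃) (B : ℝ≥0∞) :
    opSeminorm pX pZ f l ≤ B ↔ ∀ (x : ∀ k, X k) (lam : Fin n → 𝕃),
      pZ ((∑ k, lam k) + l) (f x) ≤ emul (eprod fun k => pX k (lam k) (x k)) B := by
  simpa only [opSeminorm, Prod.forall] using sInf_admissible_le_iff
    (fun p : (∀ k, X k) × (Fin n → 𝕃) => pZ ((∑ k, p.2 k) + l) (f p.1))
    (fun p => eprod fun k => pX k (p.2 k) (p.1 k)) B

theorem short_iff_curried_short_general {𝕜 : Type*} [RCLike 𝕜] {𝕃 : Type*} [AddCommMonoid 𝕃]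
    [PartialOrder 𝕃] {n m : ℕ}
    {X : Fin n → Type*} [∀ k, AddCommGroup (X k)] [∀ k, Module 𝕜 (X k)]
    {Y : Fin m → Type*} [∀ j, AddCommGroup (Y j)] [∀ j, Module 𝕜 (Y j)]
    {Z : Type*} [AddCommGroup Z] [Module 𝕜 Z]
    (pX : ∀ k, 𝕃 → X k → ℝ≥0∞)
    (pY : ∀ j, 𝕃 → Y j → ℝ≥0∞)
    (pZ : 𝕃 → Z → ℝ≥0∞)
    (ψ : MultilinearMap 𝕜 Y (MultilinearMap 𝕜 X Z)) :
    (∀ (x : ∀ k, X k) (y : ∀ j, Y j) (lam : Fin n → 𝕃) (mu : Fin m → 𝕃),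
        pZ ((∑ k, lam k) + ∑ j, mu j) (ψ y x) ≤
          emul (eprod (fun k => pX k (lam k) (x k))) (eprod (fun j => pY j (mu j) (y j)))) ↔
      (∀ (y : ∀ j, Y j) (mu : Fin m → 𝕃),
        opSeminorm pX pZ (ψ y) (∑ j, mu j) ≤ eprod (fun j => pY j (mu j) (y j))) := by
  simp only [opSeminorm_le_iff]
  exact ⟨fun h y mu x lam => h x y lam mu, fun h x y lam mu => h y mu x lam⟩

/-- (Closedness of the multicategory of short spaces.)  Let
`ξ : X 1 × ⋯ × X n × Y 1 × ⋯ × Y m → Z` be a multilinear map between short spaces, given in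
curried form `ψ : (y 1, …, y m) ↦ ((x 1, …, x n) ↦ ξ(x, y))`.  Then `ξ` is short if and only if
`ψ` satisfies `‖ψ y‖_{μ₁+⋯+μₘ} ≤ ‖y₁‖_{μ₁} ⋯ ‖yₘ‖_{μₘ}` for all `y` and `μ`, where `‖·‖_l` is the
operator seminorm on multilinear maps `X 1 × ⋯ × X n → Z`. -/
theorem short_iff_curried_short {𝕜 : Type*} [RCLike 𝕜] {𝕃 : Type*} [AddCommMonoid 𝕃]
    [PartialOrder 𝕃] {n m : ℕ}
    {X : Fin n → Type*} [∀ k, AddCommGroup (X k)] [∀ k, Module 𝕜 (X k)]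
    {Y : Fin m → Type*} [∀ j, AddCommGroup (Y j)] [∀ j, Module 𝕜 (Y j)]
    {Z : Type*} [AddCommGroup Z] [Module 𝕜 Z]
    (pX : ∀ k, 𝕃 → X k → ℝ≥0∞)
    (hpX_smul : ∀ k l (c : 𝕜) (x : X k), pX k l (c • x) = (‖c‖₊ : ℝ≥0∞) * pX k l x)
    (hpX_add : ∀ k l (x y : X k), pX k l (x + y) ≤ pX k l x + pX k l y)
    (hpX_mono : ∀ k (x : X k) (a b : 𝕃), a ≤ b → pX k a x ≤ pX k b x)
    (hpX_fin : ∀ k (x : X k), ∃ l, pX k l x < ⊤)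
    (pY : ∀ j, 𝕃 → Y j → ℝ≥0∞)
    (hpY_smul : ∀ j l (c : 𝕜) (y : Y j), pY j l (c • y) = (‖c‖₊ : ℝ≥0∞) * pY j l y)
    (hpY_add : ∀ j l (y y' : Y j), pY j l (y + y') ≤ pY j l y + pY j l y')
    (hpY_mono : ∀ j (y : Y j) (a b : 𝕃), a ≤ b → pY j a y ≤ pY j b y)
    (hpY_fin : ∀ j (y : Y j), ∃ l, pY j l y < ⊤)
    (pZ : 𝕃 → Z → ℝ≥0∞)
    (hpZ_smul : ∀ l (c : 𝕜) (z : Z), pZ l (c • z) = (‖c‖₊ : ℝ≥0∞) * pZ l z)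
    (hpZ_add : ∀ l (z w : Z), pZ l (z + w) ≤ pZ l z + pZ l w)
    (hpZ_mono : ∀ (z : Z) (a b : 𝕃), a ≤ b → pZ a z ≤ pZ b z)
    (hpZ_fin : ∀ z : Z, ∃ l, pZ l z < ⊤)
    (ψ : MultilinearMap 𝕜 Y (MultilinearMap 𝕜 X Z)) :
    (∀ (x : ∀ k, X k) (y : ∀ j, Y j) (lam : Fin n → 𝕃) (mu : Fin m → 𝕃),
        pZ ((∑ k, lam k) + ∑ j, mu j) (ψ y x) ≤
          emul (eprod (fun k => pX k (lam k) (x k))) (eprod (fun j => pY j (mu j) (y j)))) ↔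
      (∀ (y : ∀ j, Y j) (mu : Fin m → 𝕃),
        opSeminorm pX pZ (ψ y) (∑ j, mu j) ≤ eprod (fun j => pY j (mu j) (y j))) :=
  short_iff_curried_short_general pX pY pZ ψ
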